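/- Compact WY representation: let u_i ∈ R^i for i = n-m+1,…,n with m ≤ n-1, each nonzero, and let U ∈ R^{n×m} have j-th column (0_{j-1}; u_{n-j+1}) (zero-padded at the top). Let T = striu(UᵀU) + (1/2) diag(UᵀU), the strictly upper triangular part of UᵀU plus half its diagonal. Then T is invertible and H_n(u_n)·…·H_{n-m+1}(u_{n-m+1}) = I - U T⁻¹ Uᵀ. -/

import Mathlib

open Matrix

/-- The Householder reflection `I - 2 u uᵀ / ‖u‖²`; for `u` supported on the last `k`
coordinates this is the block matrix `H_k(u) = diag(I_{n-k}, I_k - 2 ũ ũᵀ/‖ũ‖²)`. -/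
noncomputable def householder {n : ℕ} (u : Fin n → ℝ) : Matrix (Fin n) (Fin n) ℝ :=
  1 - (2 / ∑ i, u i ^ 2) • vecMulVec u u

/-- `striu A + (1/2) diag A`: the strictly upper triangular part of `A` plus half of its
diagonal part. -/
noncomputable def wyT {m : ℕ} (A : Matrix (Fin m) (Fin m) ℝ) : Matrix (Fin m) (Fin m) ℝ :=
  Matrix.of fun i j => if (i : ℕ) < (j : ℕ) then A i j else if i = j then A i i / 2 else 0

/-!
`T` is upper triangular with diagonal entries `‖u_j‖² / 2 ≠ 0`, hence invertible. The identity
follows by induction on `m`: appending a column `w` to `U` borders `T` by the column `Uᵀ w` and the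
corner `‖w‖² / 2`, and the block-triangular inverse of the bordered matrix turns
`(I - U T⁻¹ Uᵀ) (I - 2 w wᵀ / ‖w‖²)` into `I - U T⁻¹ Uᵀ` for the enlarged `U`.
-/

lemma wyT_isUpperTriangular {m : ℕ} (A : Matrix (Fin m) (Fin m) ℝ) :
    (wyT A).IsUpperTriangular := by
  intro i j (hji : j < i)
  simp [wyT, lt_asymm hji, hji.ne']

lemma isUnit_wyT_transpose_mul_self {n m : ℕ} (V : Matrix (Fin n) (Fin m) ℝ)
    (hV : ∀ j, Vᵀ j ≠ 0) : IsUnit (wyT (Vᵀ * V)) := by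
  rw [isUnit_iff_isUnit_det, det_of_isUpperTriangular (wyT_isUpperTriangular _),
    isUnit_iff_ne_zero, Finset.prod_ne_zero_iff]
  intro j _
  have := dotProduct_self_eq_zero.not.mpr (hV j)
  simpa [wyT, mul_apply, dotProduct] using this

lemma householder_eq {n : ℕ} (w : Fin n → ℝ) :
    householder w =
      1 - (2 / (w ⬝ᵥ w)) • (replicateCol (Fin 1) w * (replicateCol (Fin 1) w)ᵀ) := by
  rw [householder, vecMulVec_eq (Fin 1), transpose_replicateCol]
  simp only [dotProduct, sq]
  rfl

lemma wyT_succ {m : ℕ} (A : Matrix (Fin (m + 1)) (Fin (m + 1)) ℝ) :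
    wyT A = (fromBlocks (wyT (A.submatrix Fin.castSucc Fin.castSucc))
      (A.submatrix Fin.castSucc fun _ => Fin.last m) 0
      ((A (Fin.last m) (Fin.last m) / 2) • 1)).submatrix
        finSumFinEquiv.symm finSumFinEquiv.symm := by
  ext i j
  induction i using Fin.lastCases <;> induction j using Fin.lastCases <;>
    simp [wyT, finSumFinEquiv_symm_last, lt_asymm (Fin.castSucc_lt_last _),
      (Fin.castSucc_lt_last _).ne']

lemma inv_smul_one_fin_one {r : ℝ} (hr : r ≠ 0) :
    (r • 1 : Matrix (Fin 1) (Fin 1) ℝ)⁻¹ = r⁻¹ • 1 :=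
  inv_eq_right_inv (by rw [smul_mul_smul_comm, mul_one, mul_inv_cancel₀ hr, one_smul])

lemma one_sub_wy_mul_householder {n : ℕ} {ι : Type*} [Fintype ι] [DecidableEq ι]
    (U : Matrix (Fin n) ι ℝ) {T : Matrix ι ι ℝ} (hT : IsUnit T) {w : Fin n → ℝ} (hw : w ≠ 0) :
    (1 - U * T⁻¹ * Uᵀ) * householder w =
      1 - fromCols U (replicateCol (Fin 1) w) *
        (fromBlocks T (Uᵀ * replicateCol (Fin 1) w) 0 ((w ⬝ᵥ w / 2) • 1) :
          Matrix (ι ⊕ Fin 1) (ι ⊕ Fin 1) ℝ)⁻¹ *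
        (fromCols U (replicateCol (Fin 1) w))ᵀ := by
  have hr : w ⬝ᵥ w / 2 ≠ 0 := div_ne_zero (dotProduct_self_eq_zero.not.mpr hw) two_ne_zero
  have hd : IsUnit ((w ⬝ᵥ w / 2) • 1 : Matrix (Fin 1) (Fin 1) ℝ) := by
    simpa [isUnit_iff_isUnit_det] using hr
  rw [inv_fromBlocks_zero₂₁_of_isUnit_iff _ _ _ (iff_of_true hT hd), inv_smul_one_fin_one hr,
    transpose_fromCols, fromCols_mul_fromBlocks, fromCols_mul_fromRows, householder_eq,
    inv_div]
  simp only [Matrix.mul_zero, add_zero, Matrix.mul_sub, Matrix.sub_mul, Matrix.mul_one,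
    Matrix.one_mul, Matrix.mul_smul, Matrix.smul_mul, Matrix.neg_mul, Matrix.mul_neg,
    Matrix.add_mul, Matrix.mul_assoc, smul_sub]
  abel

def columnMatrix {n : ℕ} (v : ℕ → Fin n → ℝ) (m : ℕ) : Matrix (Fin n) (Fin m) ℝ :=
  of fun i j => v j i

lemma columnMatrix_succ {n : ℕ} (v : ℕ → Fin n → ℝ) (m : ℕ) :
    columnMatrix v (m + 1) = (fromCols (columnMatrix v m)
      (replicateCol (Fin 1) (v m))).submatrix id finSumFinEquiv.symm := by
  ext i j
  induction j using Fin.lastCases <;> simp [columnMatrix, finSumFinEquiv_symm_last]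

lemma wyT_gram_columnMatrix_succ {n : ℕ} (v : ℕ → Fin n → ℝ) (m : ℕ) :
    wyT ((columnMatrix v (m + 1))ᵀ * columnMatrix v (m + 1)) =
      (fromBlocks (wyT ((columnMatrix v m)ᵀ * columnMatrix v m))
        ((columnMatrix v m)ᵀ * replicateCol (Fin 1) (v m)) 0
        ((v m ⬝ᵥ v m / 2) • 1)).submatrix finSumFinEquiv.symm finSumFinEquiv.symm := by
  rw [wyT_succ]
  rfl

lemma prod_householder_eq_one_sub_wy {n : ℕ} (v : ℕ → Fin n → ℝ) (m : ℕ)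
    (hv : ∀ j < m, v j ≠ 0) :
    ((List.range m).map fun j => householder (v j)).prod =
      1 - columnMatrix v m * (wyT ((columnMatrix v m)ᵀ * columnMatrix v m))⁻¹ *
        (columnMatrix v m)ᵀ := by
  induction m with
  | zero => simp
  | succ m ih =>
    have hT : IsUnit (wyT ((columnMatrix v m)ᵀ * columnMatrix v m)) :=
      isUnit_wyT_transpose_mul_self _ fun j => hv j (by omega)
    rw [List.range_succ, List.map_append, List.prod_append, List.map_singleton,
      List.prod_singleton, ih fun j hj => hv j (by omega),
      one_sub_wy_mul_householder _ hT (hv m m.lt_succ_self), wyT_gram_columnMatrix_succ,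
      inv_submatrix_equiv, columnMatrix_succ, transpose_submatrix, submatrix_mul_equiv,
      submatrix_mul_equiv, submatrix_id_id]

/-- compact WY representation: with `U ∈ ℝ^{n×m}` whose `j`-th column is
`u_{n-j+1}` zero-padded on top, and `T = striu(UᵀU) + (1/2)diag(UᵀU)`, the matrix `T` is
invertible and `H_n(u_n) ⋯ H_{n-m+1}(u_{n-m+1}) = I - U T⁻¹ Uᵀ`. -/
theorem compact_WY {n m : ℕ} (hm : m ≤ n - 1)
    (u : ℕ → (Fin n → ℝ))
    (hu : ∀ k, n - m + 1 ≤ k → k ≤ n →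
      (u k ≠ 0 ∧ ∀ i : Fin n, (i : ℕ) < n - k → u k i = 0)) :
    IsUnit (wyT ((Matrix.of fun (i : Fin n) (j : Fin m) => u (n - (j : ℕ)) i).transpose *
        (Matrix.of fun (i : Fin n) (j : Fin m) => u (n - (j : ℕ)) i))) ∧
    (((List.range m).map (fun j => householder (u (n - j)))).prod) =
      1 - (Matrix.of fun (i : Fin n) (j : Fin m) => u (n - (j : ℕ)) i) *
        (wyT ((Matrix.of fun (i : Fin n) (j : Fin m) => u (n - (j : ℕ)) i).transpose *
          (Matrix.of fun (i : Fin n) (j : Fin m) => u (n - (j : ℕ)) i)))⁻¹ *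
        (Matrix.of fun (i : Fin n) (j : Fin m) => u (n - (j : ℕ)) i).transpose := by
  have hv : ∀ j < m, u (n - j) ≠ 0 := fun j hj => (hu (n - j) (by omega) (by omega)).1
  exact ⟨isUnit_wyT_transpose_mul_self (columnMatrix (fun j => u (n - j)) m) fun j => hv j j.2,
    prod_householder_eq_one_sub_wy (fun j => u (n - j)) m hv⟩
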